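/- (Theorem 9) In a two-player single-controller stochastic game, let 𝒞 be a nonempty compact set of player-one cost matrices such that C¹(π₂*) ∈ 𝒞 for every Nash equilibrium (π₁*, π₂*), and let 𝒱* be the unique nonempty compact fixed point set of F_𝒞. Then for every Nash equilibrium (π₁*, π₂*), player one's stationary value function V(π₁*, π₂*) satisfies f_{C¹(π₂*)}(V(π₁*, π₂*)) = V(π₁*, π₂*) and consequently V(π₁*, π₂*) ∈ 𝒱*. -/

import Mathlib

open Metric

/-- The Bellman operator for a discounted MDP with transition kernel `P`,
discount factor `γ` and cost matrix `C`. -/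
noncomputable def bellman (S A : ℕ) (P : Fin S → Fin S → Fin A → ℝ) (γ : ℝ)
    (C : Fin S → Fin A → ℝ) (V : Fin S → ℝ) : Fin S → ℝ :=
  fun s => ⨅ a : Fin A, (C s a + γ * ∑ s' : Fin S, P s' s a * V s')

/-- The set-based Bellman operator associated with a set `𝒞` of cost matrices. -/
noncomputable def setBellman (S A : ℕ) (P : Fin S → Fin S → Fin A → ℝ) (γ : ℝ)
    (𝒞 : Set (Fin S → Fin A → ℝ)) (𝒱 : Set (Fin S → ℝ)) : Set (Fin S → ℝ) :=
  closure (⋃ C ∈ 𝒞, ⋃ V ∈ 𝒱, {bellman S A P γ C V})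

/-- A (stationary, possibly mixed) policy: a probability distribution over actions at
each state. -/
def IsPolicy {S A : ℕ} (π : Fin S → Fin A → ℝ) : Prop :=
  (∀ s a, 0 ≤ π s a) ∧ ∀ s, ∑ a : Fin A, π s a = 1

/-- Player one's induced cost matrix in a two-player game when player two plays `π₂`. -/
noncomputable def playerOneCost {S A₁ A₂ : ℕ} (D1 : Fin S → Fin A₁ → Fin A₂ → ℝ)
    (π₂ : Fin S → Fin A₂ → ℝ) : Fin S → Fin A₁ → ℝ :=
  fun s a => ∑ b : Fin A₂, π₂ s b * D1 s a b

/-- Player two's induced cost in a single-controller game when player one plays `π₁`. -/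
noncomputable def playerTwoCost {S A₁ A₂ : ℕ} (D2 : Fin S → Fin A₁ → Fin A₂ → ℝ)
    (π₁ : Fin S → Fin A₁ → ℝ) : Fin S → Fin A₂ → ℝ :=
  fun s b => ∑ a : Fin A₁, π₁ s a * D2 s a b

/-- Player two's induced transition kernel (a Markov chain) in a single-controller game. -/
noncomputable def playerTwoKernel {S A₁ : ℕ} (P : Fin S → Fin S → Fin A₁ → ℝ)
    (π₁ : Fin S → Fin A₁ → ℝ) : Fin S → Fin S → ℝ :=
  fun s' s => ∑ a : Fin A₁, π₁ s a * P s' s a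

/-- `V` is the stationary value function of player one under the joint policy `(π₁, π₂)`
in a single-controller game with kernel `P`, cost `D1` and discount `γ₁`. -/
def IsStationaryValueOne {S A₁ A₂ : ℕ} (P : Fin S → Fin S → Fin A₁ → ℝ) (γ₁ : ℝ)
    (D1 : Fin S → Fin A₁ → Fin A₂ → ℝ) (π₁ : Fin S → Fin A₁ → ℝ)
    (π₂ : Fin S → Fin A₂ → ℝ) (V : Fin S → ℝ) : Prop :=
  ∀ s, V s = ∑ a : Fin A₁,
    π₁ s a * (playerOneCost D1 π₂ s a + γ₁ * ∑ s' : Fin S, P s' s a * V s')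

/-- `W` is the stationary value function of player two under the joint policy `(π₁, π₂)`
in a single-controller game with kernel `P`, cost `D2` and discount `γ₂`. -/
def IsStationaryValueTwo {S A₁ A₂ : ℕ} (P : Fin S → Fin S → Fin A₁ → ℝ) (γ₂ : ℝ)
    (D2 : Fin S → Fin A₁ → Fin A₂ → ℝ) (π₁ : Fin S → Fin A₁ → ℝ)
    (π₂ : Fin S → Fin A₂ → ℝ) (W : Fin S → ℝ) : Prop :=
  ∀ s, W s = (∑ b : Fin A₂, π₂ s b * playerTwoCost D2 π₁ s b) +
    γ₂ * ∑ s' : Fin S, playerTwoKernel P π₁ s' s * W s'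

/-- `(π₁, π₂)` is a Nash equilibrium of the two-player single-controller stochastic game:
no player can improve their stationary value function by a unilateral policy change. -/
def IsNash {S A₁ A₂ : ℕ} (P : Fin S → Fin S → Fin A₁ → ℝ) (γ₁ γ₂ : ℝ)
    (D1 D2 : Fin S → Fin A₁ → Fin A₂ → ℝ)
    (π₁ : Fin S → Fin A₁ → ℝ) (π₂ : Fin S → Fin A₂ → ℝ) : Prop :=
  IsPolicy π₁ ∧ IsPolicy π₂ ∧
  (∀ π₁' : Fin S → Fin A₁ → ℝ, IsPolicy π₁' →
    ∀ V V' : Fin S → ℝ, IsStationaryValueOne P γ₁ D1 π₁ π₂ V →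
      IsStationaryValueOne P γ₁ D1 π₁' π₂ V' → V ≤ V') ∧
  (∀ π₂' : Fin S → Fin A₂ → ℝ, IsPolicy π₂' →
    ∀ W W' : Fin S → ℝ, IsStationaryValueTwo P γ₂ D2 π₁ π₂ W →
      IsStationaryValueTwo P γ₂ D2 π₁ π₂' W' → W ≤ W')

/-!
The Bellman operator `f_C` of `C = C¹(π₂*)` is a monotone `γ₁`-contraction; let `V⋆` be its
fixed point. A policy greedy with respect to `V⋆` has value `V⋆`, so the Nash property gives
`V ≤ V⋆`. Conversely `f_C V ≤ V`, since a minimum lies below any average, and monotonicity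
propagates this along the iterates of `f_C` to `V⋆ ≤ V`. Hence `V = V⋆` is a fixed point of
`f_C`. Finally `C ∈ 𝒞`, so `f_C` maps the closed set `𝒱* = F_𝒞(𝒱*)` into itself, and the
iterates of `f_C` starting in `𝒱*` converge to `V`.
-/

namespace ContractingWith

variable {α : Type*} [MetricSpace α] [CompleteSpace α] [Nonempty α] {K : NNReal} {f : α → α}

theorem fixedPoint_mem_of_mapsTo (hf : ContractingWith K f) {s : Set α} (hs : IsClosed s)
    (hsf : Set.MapsTo f s s) (hne : s.Nonempty) : fixedPoint f hf ∈ s := by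
  obtain ⟨x, hx⟩ := hne
  exact hs.mem_of_tendsto (hf.tendsto_iterate_fixedPoint x)
    (Filter.Eventually.of_forall fun n => hsf.iterate n hx)

theorem fixedPoint_le_of_map_le [Preorder α] [ClosedIicTopology α] (hf : ContractingWith K f)
    (hmono : Monotone f) {x : α} (hx : f x ≤ x) : fixedPoint f hf ≤ x :=
  hf.fixedPoint_mem_of_mapsTo isClosed_Iic
    (fun _ hy => (hmono hy).trans hx) ⟨x, le_rfl⟩

end ContractingWith

theorem ciInf_le_ciInf_add {ι : Type*} [Finite ι] [Nonempty ι] {f g : ι → ℝ} {c : ℝ}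
    (h : ∀ i, f i ≤ g i + c) : ⨅ i, f i ≤ (⨅ i, g i) + c := by
  rw [← sub_le_iff_le_add]
  exact le_ciInf fun i => sub_le_iff_le_add.2 ((ciInf_le (Finite.bddBelow_range f) i).trans (h i))

theorem sum_mul_le_sum_mul_add_dist {S : ℕ} {p : Fin S → ℝ} (hp0 : ∀ s, 0 ≤ p s)
    (hp1 : ∑ s, p s = 1) (V W : Fin S → ℝ) :
    ∑ s, p s * V s ≤ ∑ s, p s * W s + dist V W :=
  calc ∑ s, p s * V s ≤ ∑ s, p s * (W s + dist V W) := by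
        gcongr with s
        · exact hp0 s
        · linarith [abs_le.1 ((Real.dist_eq _ _).symm.trans_le (dist_le_pi_dist V W s))]
    _ = ∑ s, p s * W s + dist V W := by
        simp only [mul_add, Finset.sum_add_distrib, ← Finset.sum_mul, hp1, one_mul]

section Bellman

variable {S A : ℕ} {P : Fin S → Fin S → Fin A → ℝ} {γ : ℝ} {C : Fin S → Fin A → ℝ}

def actionValue (P : Fin S → Fin S → Fin A → ℝ) (γ : ℝ) (C : Fin S → Fin A → ℝ)
    (V : Fin S → ℝ) (s : Fin S) (a : Fin A) : ℝ :=
  C s a + γ * ∑ s', P s' s a * V s'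

theorem bellman_apply (V : Fin S → ℝ) (s : Fin S) :
    bellman S A P γ C V s = ⨅ a, actionValue P γ C V s a :=
  rfl

theorem isStationaryValueOne_iff {A₂ : ℕ} {D1 : Fin S → Fin A → Fin A₂ → ℝ}
    {π₁ : Fin S → Fin A → ℝ} {π₂ : Fin S → Fin A₂ → ℝ} {V : Fin S → ℝ} :
    IsStationaryValueOne P γ D1 π₁ π₂ V ↔
      ∀ s, V s = ∑ a, π₁ s a * actionValue P γ (playerOneCost D1 π₂) V s a :=
  Iff.rfl

theorem monotone_actionValue (hP0 : ∀ s' s a, 0 ≤ P s' s a) (hγ : 0 ≤ γ) (s : Fin S)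
    (a : Fin A) : Monotone fun V => actionValue P γ C V s a := by
  intro V W hVW
  dsimp only [actionValue]
  gcongr with s'
  · exact hP0 s' s a
  · exact hVW s'

theorem actionValue_le_add_dist (hP0 : ∀ s' s a, 0 ≤ P s' s a)
    (hP1 : ∀ s a, ∑ s', P s' s a = 1) (hγ : 0 ≤ γ) (V W : Fin S → ℝ) (s : Fin S) (a : Fin A) :
    actionValue P γ C V s a ≤ actionValue P γ C W s a + γ * dist V W := by
  have := mul_le_mul_of_nonneg_left
    (sum_mul_le_sum_mul_add_dist (hP0 · s a) (hP1 s a) V W) hγ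
  simp only [actionValue]
  linarith

theorem monotone_bellman (hP0 : ∀ s' s a, 0 ≤ P s' s a) (hγ : 0 ≤ γ) :
    Monotone (bellman S A P γ C) :=
  fun _ _ hVW s => ciInf_mono (Finite.bddBelow_range _)
    fun a => monotone_actionValue hP0 hγ s a hVW

theorem dist_bellman_le [Nonempty (Fin A)] (hP0 : ∀ s' s a, 0 ≤ P s' s a)
    (hP1 : ∀ s a, ∑ s', P s' s a = 1) (hγ : 0 ≤ γ) (V W : Fin S → ℝ) :
    dist (bellman S A P γ C V) (bellman S A P γ C W) ≤ γ * dist V W := by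
  refine (dist_pi_le_iff (mul_nonneg hγ dist_nonneg)).2 fun s => ?_
  rw [Real.dist_eq, abs_sub_le_iff, sub_le_iff_le_add', sub_le_iff_le_add', bellman_apply,
    bellman_apply]
  constructor
  · exact ciInf_le_ciInf_add fun a => actionValue_le_add_dist hP0 hP1 hγ V W s a
  · rw [dist_comm]
    exact ciInf_le_ciInf_add fun a => actionValue_le_add_dist hP0 hP1 hγ W V s a

theorem contractingWith_bellman [Nonempty (Fin A)] (hP0 : ∀ s' s a, 0 ≤ P s' s a)
    (hP1 : ∀ s a, ∑ s', P s' s a = 1) (hγ0 : 0 ≤ γ) (hγ1 : γ < 1) :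
    ContractingWith ⟨γ, hγ0⟩ (bellman S A P γ C) :=
  ⟨by exact_mod_cast hγ1, LipschitzWith.of_dist_le_mul (dist_bellman_le hP0 hP1 hγ0)⟩

theorem bellman_apply_le_sum {π : Fin S → Fin A → ℝ} (hπ : IsPolicy π) (V : Fin S → ℝ)
    (s : Fin S) : bellman S A P γ C V s ≤ ∑ a, π s a * actionValue P γ C V s a :=
  calc bellman S A P γ C V s = ∑ a, π s a * bellman S A P γ C V s := by
        rw [← Finset.sum_mul, hπ.2 s, one_mul]
    _ ≤ ∑ a, π s a * actionValue P γ C V s a :=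
        Finset.sum_le_sum fun a _ =>
          mul_le_mul_of_nonneg_left (ciInf_le (Finite.bddBelow_range _) a) (hπ.1 s a)

theorem exists_isPolicy_sum_eq_bellman [Nonempty (Fin A)] (V : Fin S → ℝ) :
    ∃ π : Fin S → Fin A → ℝ, IsPolicy π ∧
      ∀ s, ∑ a, π s a * actionValue P γ C V s a = bellman S A P γ C V s := by
  choose g hg using fun s => exists_eq_ciInf_of_finite (f := actionValue P γ C V s)
  refine ⟨fun s a => if a = g s then 1 else 0, ⟨fun s a => by positivity, fun s => ?_⟩,
    fun s => ?_⟩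
  · simp
  · simp [ite_mul, bellman_apply, hg s]

theorem isClosed_setBellman (𝒞 : Set (Fin S → Fin A → ℝ)) (𝒱 : Set (Fin S → ℝ)) :
    IsClosed (setBellman S A P γ 𝒞 𝒱) :=
  isClosed_closure

theorem mapsTo_bellman_setBellman {𝒞 : Set (Fin S → Fin A → ℝ)} (hC : C ∈ 𝒞)
    (𝒱 : Set (Fin S → ℝ)) : Set.MapsTo (bellman S A P γ C) 𝒱 (setBellman S A P γ 𝒞 𝒱) :=
  fun _ hV => subset_closure (Set.mem_biUnion hC (Set.mem_biUnion hV rfl))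

end Bellman

theorem IsNash.bellman_value_eq {S A₁ A₂ : ℕ} [Nonempty (Fin A₁)]
    {P : Fin S → Fin S → Fin A₁ → ℝ} (hP0 : ∀ s' s a, 0 ≤ P s' s a)
    (hP1 : ∀ s a, ∑ s', P s' s a = 1) {γ₁ γ₂ : ℝ} (hγ0 : 0 ≤ γ₁) (hγ1 : γ₁ < 1)
    {D1 D2 : Fin S → Fin A₁ → Fin A₂ → ℝ} {π₁ : Fin S → Fin A₁ → ℝ} {π₂ : Fin S → Fin A₂ → ℝ}
    (hN : IsNash P γ₁ γ₂ D1 D2 π₁ π₂) {V : Fin S → ℝ}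
    (hV : IsStationaryValueOne P γ₁ D1 π₁ π₂ V) :
    bellman S A₁ P γ₁ (playerOneCost D1 π₂) V = V := by
  obtain ⟨hπ₁, -, hbest, -⟩ := hN
  have hf := contractingWith_bellman (C := playerOneCost D1 π₂) hP0 hP1 hγ0 hγ1
  set Vopt := ContractingWith.fixedPoint _ hf
  have hVopt : bellman S A₁ P γ₁ (playerOneCost D1 π₂) Vopt = Vopt := hf.fixedPoint_isFixedPt
  obtain ⟨π, hπ, hgreedy⟩ := exists_isPolicy_sum_eq_bellman (P := P) (γ := γ₁)
    (C := playerOneCost D1 π₂) Vopt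
  have hVopt_value : IsStationaryValueOne P γ₁ D1 π π₂ Vopt :=
    isStationaryValueOne_iff.2 fun s => ((hgreedy s).trans (congrFun hVopt s)).symm
  have hle : V ≤ Vopt := hbest π hπ V Vopt hV hVopt_value
  have hge : Vopt ≤ V := hf.fixedPoint_le_of_map_le (monotone_bellman hP0 hγ0)
    fun s => (bellman_apply_le_sum hπ₁ V s).trans_eq (isStationaryValueOne_iff.1 hV s).symm
  rwa [le_antisymm hle hge]

theorem nash_value_mem_fixed_point_set_general (S A₁ A₂ : ℕ)
    (hA₁ : 0 < A₁)
    (P : Fin S → Fin S → Fin A₁ → ℝ)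
    (hP0 : ∀ s' s a, 0 ≤ P s' s a)
    (hP1 : ∀ s a, ∑ s' : Fin S, P s' s a = 1)
    (γ₁ γ₂ : ℝ) (hγ₁ : γ₁ ∈ Set.Ioo (0 : ℝ) 1)
    (D1 D2 : Fin S → Fin A₁ → Fin A₂ → ℝ)
    (𝒞 : Set (Fin S → Fin A₁ → ℝ))
    (h𝒞NE : ∀ π₁ π₂, IsNash P γ₁ γ₂ D1 D2 π₁ π₂ → playerOneCost D1 π₂ ∈ 𝒞)
    (Vstar : Set (Fin S → ℝ)) (hVne : Vstar.Nonempty)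
    (hVfix : setBellman S A₁ P γ₁ 𝒞 Vstar = Vstar) :
    ∀ π₁ π₂, IsNash P γ₁ γ₂ D1 D2 π₁ π₂ →
      ∀ V : Fin S → ℝ, IsStationaryValueOne P γ₁ D1 π₁ π₂ V →
        bellman S A₁ P γ₁ (playerOneCost D1 π₂) V = V ∧ V ∈ Vstar := by
  intro π₁ π₂ hN V hV
  have : Nonempty (Fin A₁) := ⟨⟨0, hA₁⟩⟩
  have hfix := hN.bellman_value_eq hP0 hP1 hγ₁.1.le hγ₁.2 hV
  refine ⟨hfix, ?_⟩
  have hf := contractingWith_bellman (C := playerOneCost D1 π₂) hP0 hP1 hγ₁.1.le hγ₁.2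
  rw [hf.fixedPoint_unique hfix]
  refine hf.fixedPoint_mem_of_mapsTo ?_ ?_ hVne
  · exact hVfix ▸ isClosed_setBellman 𝒞 Vstar
  · exact (mapsTo_bellman_setBellman (h𝒞NE π₁ π₂ hN) Vstar).mono_right hVfix.le

theorem nash_value_mem_fixed_point_set (S A₁ A₂ : ℕ)
    (hS : 0 < S) (hA₁ : 0 < A₁) (hA₂ : 0 < A₂)
    (P : Fin S → Fin S → Fin A₁ → ℝ)
    (hP0 : ∀ s' s a, 0 ≤ P s' s a)
    (hP1 : ∀ s a, ∑ s' : Fin S, P s' s a = 1)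
    (γ₁ γ₂ : ℝ) (hγ₁ : γ₁ ∈ Set.Ioo (0 : ℝ) 1) (hγ₂ : γ₂ ∈ Set.Ioo (0 : ℝ) 1)
    (D1 D2 : Fin S → Fin A₁ → Fin A₂ → ℝ)
    (𝒞 : Set (Fin S → Fin A₁ → ℝ)) (h𝒞ne : 𝒞.Nonempty) (h𝒞c : IsCompact 𝒞)
    (h𝒞NE : ∀ π₁ π₂, IsNash P γ₁ γ₂ D1 D2 π₁ π₂ → playerOneCost D1 π₂ ∈ 𝒞)
    (Vstar : Set (Fin S → ℝ)) (hVne : Vstar.Nonempty) (hVc : IsCompact Vstar)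
    (hVfix : setBellman S A₁ P γ₁ 𝒞 Vstar = Vstar) :
    ∀ π₁ π₂, IsNash P γ₁ γ₂ D1 D2 π₁ π₂ →
      ∀ V : Fin S → ℝ, IsStationaryValueOne P γ₁ D1 π₁ π₂ V →
        bellman S A₁ P γ₁ (playerOneCost D1 π₂) V = V ∧ V ∈ Vstar :=
  nash_value_mem_fixed_point_set_general S A₁ A₂ hA₁ P hP0 hP1 γ₁ γ₂ hγ₁ D1 D2 𝒞 h𝒞NE Vstar hVne
    hVfix
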